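/- Fundamental theorem of asset pricing under model uncertainty with short sales prohibitions (multi-period): there exists no self-financing trading strategy with h_m(t)(ω) ≥ 0 for all m = 1,…,M, t = 1,…,T, ω ∈ Ω that is an arbitrage under model uncertainty if and only if there exists a supermartingale measure Q with Q(ω) > 0 for every ω ∈ Ω. -/

import Mathlib

open Finset MeasureTheory

variable {Ω : Type*} [Fintype Ω]

/-- A probability measure on the finite sample space `Ω`. -/
def IsProb (P : Ω → ℝ) : Prop := (∀ ω, 0 ≤ P ω) ∧ ∑ ω, P ω = 1

/-- Expectation of `X` under `P`: `E_P[X] = ∑ ω, P ω * X ω`. -/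
def expect (P X : Ω → ℝ) : ℝ := ∑ ω, P ω * X ω

/-- Discounted value process of the strategy `(h0, h)`:
`V*(0) = h0(1) + ∑ m, h m 1 * S m 0` and `V*(t) = h0(t) + ∑ m, h m t * S m t` for `t ≥ 1`. -/
def Vstar {M : ℕ} (S : Fin M → ℕ → Ω → ℝ) (h0 : ℕ → Ω → ℝ)
    (h : Fin M → ℕ → Ω → ℝ) : ℕ → Ω → ℝ := fun t ω =>
  if t = 0 then h0 1 ω + ∑ m, h m 1 ω * S m 0 ω
  else h0 t ω + ∑ m, h m t ω * S m t ω

/-- Discounted gain process `G*(t) = ∑ m, ∑ u = 1..t, h m u * (S m u − S m (u−1))`. -/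
def Gstar {M : ℕ} (S : Fin M → ℕ → Ω → ℝ) (h : Fin M → ℕ → Ω → ℝ) : ℕ → Ω → ℝ :=
  fun t ω => ∑ m, ∑ u ∈ Finset.Icc 1 t, h m u ω * (S m u ω - S m (u - 1) ω)

/-- Self-financing condition, for `t = 1, …, T−1`. -/
def SelfFinancing {M : ℕ} (T : ℕ) (S : Fin M → ℕ → Ω → ℝ) (h0 : ℕ → Ω → ℝ)
    (h : Fin M → ℕ → Ω → ℝ) : Prop :=
  ∀ t : ℕ, 1 ≤ t → t + 1 ≤ T → ∀ ω,
    (h0 (t + 1) ω - h0 t ω) + ∑ m, (h m (t + 1) ω - h m t ω) * S m t ω = 0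

/-- The holdings used on `(t−1, t]` are chosen at time `t−1`:
each `h_m(t)` is `ℱ_{t−1}`-measurable, `t = 1, …, T`. -/
def MeasStrategy {M : ℕ} (T : ℕ) (F : ℕ → MeasurableSpace Ω) (h0 : ℕ → Ω → ℝ)
    (h : Fin M → ℕ → Ω → ℝ) : Prop :=
  ∀ t : ℕ, 1 ≤ t → t ≤ T →
    Measurable[F (t - 1)] (h0 t) ∧ ∀ m, Measurable[F (t - 1)] (h m t)

/-- Arbitrage under model uncertainty in the multi-period model, given the family
`Pfam` of actual probability measures. -/
def IsArbitrage {M : ℕ} (T : ℕ) (S : Fin M → ℕ → Ω → ℝ) (Pfam : Set (Ω → ℝ))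
    (h0 : ℕ → Ω → ℝ) (h : Fin M → ℕ → Ω → ℝ) : Prop :=
  (∀ ω, Vstar S h0 h 0 ω = 0) ∧ (∀ ω, 0 ≤ Vstar S h0 h T ω) ∧
    ∃ P ∈ Pfam, 0 < expect P (Vstar S h0 h T)

/-- Martingale measure: `E_Q[S*_m(u) ∣ ℱ_t] = S*_m(t)` for all `0 ≤ t ≤ u ≤ T`,
expressed via sums over `ℱ_t`-measurable sets. -/
def IsMartingaleMeasure {M : ℕ} (T : ℕ) (F : ℕ → MeasurableSpace Ω)
    (S : Fin M → ℕ → Ω → ℝ) (Q : Ω → ℝ) : Prop :=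
  ∀ (m : Fin M) (t u : ℕ), t ≤ u → u ≤ T → ∀ A : Finset Ω,
    MeasurableSet[F t] (A : Set Ω) →
    ∑ ω ∈ A, Q ω * S m u ω = ∑ ω ∈ A, Q ω * S m t ω

/-- Supermartingale measure: `E_Q[S*_m(u) ∣ ℱ_t] ≤ S*_m(t)` for all `0 ≤ t ≤ u ≤ T`,
expressed via sums over `ℱ_t`-measurable sets. -/
def IsSupermartingaleMeasure {M : ℕ} (T : ℕ) (F : ℕ → MeasurableSpace Ω)
    (S : Fin M → ℕ → Ω → ℝ) (Q : Ω → ℝ) : Prop :=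
  ∀ (m : Fin M) (t u : ℕ), t ≤ u → u ≤ T → ∀ A : Finset Ω,
    MeasurableSet[F t] (A : Set Ω) →
    ∑ ω ∈ A, Q ω * S m u ω ≤ ∑ ω ∈ A, Q ω * S m t ω

/-!
Supermartingale measure ⇒ no arbitrage: a self-financing strategy started from zero ends with
its accumulated gains `∑ h_m(u) ΔS*_m(u)`. On each level set of the `ℱ_{u-1}`-measurable holding
`h_m(u) ≥ 0` the `Q`-expected increment of `S*_m` is nonpositive, so `E_Q[V*(T)] ≤ 0`; together
with `V*(T) ≥ 0` and `Q > 0` this forces `V*(T) = 0`.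

No arbitrage ⇒ supermartingale measure: a nonnegative combination of the gains `1_A ΔS*_m(s+1)`
(`A ∈ ℱ_s`) of elementary trades is the terminal value of a short-sale-free self-financing
strategy, so no such combination is nonnegative and nonzero. For each `ω₀`, Farkas' lemma (finitely
generated cones are closed, by the conic Carathéodory theorem) separates `e_{ω₀}` from the cone
generated by these gains and the vectors `-e_ω`, which yields weights `f ≥ 0` with `f ω₀ > 0`
under which every elementary gain has nonpositive mean. The normalised sum of these weights
over `ω₀` is `Q`.
-/

section ConicCaratheodory

variable {ι E : Type*} [AddCommGroup E] [Module ℝ E] {v : ι → E}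

lemma exists_erase_nonneg_sum_smul_eq [DecidableEq ι] {s : Finset ι} (hs : ¬ LinearIndepOn ℝ v s)
    {c : ι → ℝ} (hc : ∀ i ∈ s, 0 ≤ c i) :
    ∃ j ∈ s, ∃ c' : ι → ℝ, (∀ i ∈ s, 0 ≤ c' i) ∧
      ∑ i ∈ s.erase j, c' i • v i = ∑ i ∈ s, c i • v i := by
  obtain ⟨g, hg, hpos⟩ : ∃ g : ι → ℝ, ∑ i ∈ s, g i • v i = 0 ∧ (s.filter (0 < g ·)).Nonempty := by
    obtain ⟨g, hg, i, hi, hgi⟩ := not_linearIndepOn_finset_iff.mp hs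
    rcases hgi.lt_or_gt with hneg | hpos
    · exact ⟨-g, by simp [neg_smul, hg], i, by simpa [hi] using hneg⟩
    · exact ⟨g, hg, i, by simpa [hi] using hpos⟩
  -- Move along `-g` until the first coefficient hits zero.
  obtain ⟨j, hj, hjmin⟩ := exists_min_image _ (fun i => c i / g i) hpos
  rw [mem_filter] at hj
  set r := c j / g j
  have hr : 0 ≤ r := div_nonneg (hc j hj.1) hj.2.le
  refine ⟨j, hj.1, fun i => c i - r * g i, fun i hi => ?_, ?_⟩
  · rcases lt_or_ge 0 (g i) with hgi | hgi
    · have := (le_div_iff₀ hgi).mp (hjmin i (mem_filter.mpr ⟨hi, hgi⟩))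
      linarith
    · nlinarith [hc i hi]
  · rw [sum_erase _ (by simp only [r, div_mul_cancel₀ _ hj.2.ne', sub_self, zero_smul])]
    simp only [sub_smul, sum_sub_distrib, mul_smul, ← smul_sum, hg, smul_zero, sub_zero]

lemma exists_linearIndepOn_nonneg_sum_smul_eq (s : Finset ι) {c : ι → ℝ}
    (hc : ∀ i ∈ s, 0 ≤ c i) :
    ∃ t ⊆ s, LinearIndepOn ℝ v t ∧ ∃ d : ι → ℝ, (∀ i ∈ t, 0 ≤ d i) ∧
      ∑ i ∈ t, d i • v i = ∑ i ∈ s, c i • v i := by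
  classical
  induction s using strongInduction generalizing c with
  | H s ih =>
    by_cases hs : LinearIndepOn ℝ v s
    · exact ⟨s, subset_rfl, hs, c, hc, rfl⟩
    obtain ⟨j, hj, c', hc', hsum⟩ := exists_erase_nonneg_sum_smul_eq hs hc
    obtain ⟨t, hts, ht, d, hd, hdsum⟩ :=
      ih _ (erase_ssubset hj) fun i hi => hc' i (mem_of_mem_erase hi)
    exact ⟨t, hts.trans (erase_subset _ _), ht, d, hd, hdsum.trans hsum⟩

end ConicCaratheodory

section ConicFarkas

variable {ι E : Type*} [AddCommGroup E] [Module ℝ E] {v : ι → E}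

lemma PointedCone.mem_hull_range_iff [Fintype ι] {x : E} :
    x ∈ PointedCone.hull ℝ (Set.range v) ↔ ∃ c : ι → ℝ, 0 ≤ c ∧ ∑ i, c i • v i = x := by
  rw [PointedCone.hull, Submodule.mem_span_range_iff_exists_fun]
  constructor
  · rintro ⟨c, rfl⟩
    exact ⟨fun i => c i, fun i => (c i).2, rfl⟩
  · rintro ⟨c, hc, rfl⟩
    exact ⟨fun i => ⟨c i, hc i⟩, rfl⟩

variable [TopologicalSpace E] [IsTopologicalAddGroup E] [ContinuousSMul ℝ E] [T2Space E]

lemma isClosed_hull_range_of_linearIndependent [Fintype ι] (hv : LinearIndependent ℝ v) :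
    IsClosed (PointedCone.hull ℝ (Set.range v) : Set E) := by
  have hinj : LinearMap.ker (Fintype.linearCombination ℝ v) = ⊥ :=
    LinearMap.ker_eq_bot.mpr (linearIndependent_iff_injective_fintypeLinearCombination.mp hv)
  have : (PointedCone.hull ℝ (Set.range v) : Set E) =
      Fintype.linearCombination ℝ v '' Set.Ici 0 := by
    ext x
    simp [PointedCone.mem_hull_range_iff, Fintype.linearCombination_apply]
  rw [this]
  exact (LinearMap.isClosedEmbedding_of_injective hinj).isClosedMap _ isClosed_Ici

lemma isClosed_hull_range [Finite ι] : IsClosed (PointedCone.hull ℝ (Set.range v) : Set E) := by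
  have := Fintype.ofFinite ι
  have hunion : (PointedCone.hull ℝ (Set.range v) : Set E) =
      ⋃ t ∈ {t : Finset ι | LinearIndepOn ℝ v t},
        PointedCone.hull ℝ (Set.range fun i : t => v i) := by
    apply subset_antisymm
    · intro x hx
      obtain ⟨c, hc, rfl⟩ := PointedCone.mem_hull_range_iff.mp hx
      obtain ⟨t, -, ht, d, hd, hsum⟩ :=
        exists_linearIndepOn_nonneg_sum_smul_eq univ (v := v) fun i _ => hc i
      refine Set.mem_biUnion ht
        (PointedCone.mem_hull_range_iff.mpr ⟨fun i => d i, fun i => hd i i.2, ?_⟩)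
      rw [← hsum, ← sum_attach t]; rfl
    · refine Set.iUnion₂_subset fun t _ => Submodule.span_mono ?_
      rintro _ ⟨i, rfl⟩
      exact ⟨i, rfl⟩
  rw [hunion]
  exact (Set.toFinite _).isClosed_biUnion fun t ht => isClosed_hull_range_of_linearIndependent ht

theorem exists_strongDual_nonpos_of_notMem_hull [LocallyConvexSpace ℝ E] [Finite ι] {b : E}
    (hb : b ∉ PointedCone.hull ℝ (Set.range v)) :
    ∃ f : StrongDual ℝ E, (∀ i, f (v i) ≤ 0) ∧ 0 < f b := by
  let C : ProperCone ℝ E :=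
    { toSubmodule := PointedCone.hull ℝ (Set.range v), isClosed' := isClosed_hull_range }
  obtain ⟨f, hC, hfb⟩ := C.hyperplane_separation_point hb
  exact ⟨-f, fun i => by simpa using hC _ (Submodule.subset_span ⟨i, rfl⟩), by simpa using hfb⟩

end ConicFarkas

section Stiemke

variable {ι Ω : Type*} [Fintype ι] [Fintype Ω] {v : ι → Ω → ℝ}

lemma StrongDual.apply_eq_dotProduct [DecidableEq Ω] (f : StrongDual ℝ (Ω → ℝ)) (x : Ω → ℝ) :
    f x = (fun ω => f (Pi.single ω 1)) ⬝ᵥ x := by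
  conv_lhs => rw [← univ_sum_single x]
  simp only [map_sum, dotProduct]
  refine sum_congr rfl fun ω _ => ?_
  rw [mul_comm, ← smul_eq_mul, ← map_smul, ← Pi.single_smul', smul_eq_mul, mul_one]

lemma exists_nonneg_forall_dotProduct_nonpos_and_pos_apply
    (hv : ∀ x ∈ PointedCone.hull ℝ (Set.range v), 0 ≤ x → x = 0) (ω₀ : Ω) :
    ∃ f : Ω → ℝ, 0 ≤ f ∧ (∀ i, f ⬝ᵥ v i ≤ 0) ∧ 0 < f ω₀ := by
  classical
  -- Separate `e_ω₀` from the cone spanned by the `v i` and the negative orthant.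
  let w : ι ⊕ Ω → Ω → ℝ := Sum.elim v fun ω => -Pi.single ω 1
  have hb : Pi.single ω₀ 1 ∉ PointedCone.hull ℝ (Set.range w) := by
    rw [PointedCone.mem_hull_range_iff]
    rintro ⟨c, hc, hsum⟩
    have hx : ∑ i, c (.inl i) • v i = Pi.single ω₀ 1 + fun ω => c (.inr ω) := by
      rw [← hsum, Fintype.sum_sum_type]
      ext ω
      simp [w, Finset.sum_apply, Pi.single_apply]
    have hx0 : 0 ≤ ∑ i, c (.inl i) • v i := by
      rw [hx]; exact add_nonneg (by simp [Pi.single_nonneg]) fun ω => hc (.inr ω)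
    have hx_eq := hv _ (PointedCone.mem_hull_range_iff.mpr ⟨_, fun i => hc (.inl i), rfl⟩) hx0
    have hc₀ : 0 ≤ c (.inr ω₀) := hc _
    have := congrFun (hx.symm.trans hx_eq) ω₀
    simp only [Pi.add_apply, Pi.single_eq_same, Pi.zero_apply] at this
    linarith
  obtain ⟨f, hfw, hfb⟩ := exists_strongDual_nonpos_of_notMem_hull hb
  refine ⟨fun ω => f (Pi.single ω 1), fun ω => ?_, fun i => ?_, hfb⟩
  · simpa [w] using hfw (.inr ω)
  · rw [← StrongDual.apply_eq_dotProduct]; exact hfw (.inl i)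

theorem exists_pos_isProb_forall_dotProduct_nonpos [Nonempty Ω]
    (hv : ∀ x ∈ PointedCone.hull ℝ (Set.range v), 0 ≤ x → x = 0) :
    ∃ Q : Ω → ℝ, IsProb Q ∧ (∀ ω, 0 < Q ω) ∧ ∀ i, Q ⬝ᵥ v i ≤ 0 := by
  choose f hf0 hfv hfpos using exists_nonneg_forall_dotProduct_nonpos_and_pos_apply hv
  set q := ∑ ω₀, f ω₀
  have hq (ω : Ω) : 0 < q ω := by
    simpa [q] using sum_pos' (fun ω₀ _ => hf0 ω₀ ω) ⟨ω, mem_univ _, hfpos ω⟩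
  have hZ : 0 < ∑ ω, q ω := sum_pos (fun ω _ => hq ω) univ_nonempty
  refine ⟨(∑ ω, q ω)⁻¹ • q, ⟨fun ω => ?_, ?_⟩, fun ω => ?_, fun i => ?_⟩
  · exact mul_nonneg (inv_nonneg.mpr hZ.le) (hq ω).le
  · simp [← mul_sum, hZ.ne']
  · exact mul_pos (inv_pos.mpr hZ) (hq ω)
  · rw [smul_dotProduct, sum_dotProduct]
    exact smul_nonpos_of_nonneg_of_nonpos (by positivity) (sum_nonpos fun ω₀ _ => hfv ω₀ i)

end Stiemke

section ValueProcess

variable {Ω : Type*} {M : ℕ} {S : Fin M → ℕ → Ω → ℝ} {h : Fin M → ℕ → Ω → ℝ}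

lemma Gstar_zero : Gstar S h 0 = 0 := by
  ext ω; simp [Gstar]

lemma Gstar_succ (t : ℕ) (ω : Ω) :
    Gstar S h (t + 1) ω = Gstar S h t ω + ∑ m, h m (t + 1) ω * (S m (t + 1) ω - S m t ω) := by
  simp only [Gstar, ← sum_add_distrib, sum_Icc_succ_top (Nat.le_add_left 1 t),
    add_tsub_cancel_right]

lemma Vstar_succ {T : ℕ} {h0 : ℕ → Ω → ℝ} (hsf : SelfFinancing T S h0 h) {t : ℕ} (ht : t + 1 ≤ T)
    (ω : Ω) :
    Vstar S h0 h (t + 1) ω = Vstar S h0 h t ω + ∑ m, h m (t + 1) ω * (S m (t + 1) ω - S m t ω) := by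
  rcases Nat.eq_zero_or_pos t with rfl | ht0
  · simp [Vstar, mul_sub]
  · have := hsf t ht0 ht ω
    simp only [Vstar, if_neg (Nat.succ_ne_zero t), if_neg ht0.ne', mul_sub, sub_mul,
      sum_sub_distrib] at this ⊢
    linarith

lemma Vstar_eq_Vstar_zero_add_Gstar {T : ℕ} {h0 : ℕ → Ω → ℝ} (hsf : SelfFinancing T S h0 h)
    {t : ℕ} (ht : t ≤ T) (ω : Ω) : Vstar S h0 h t ω = Vstar S h0 h 0 ω + Gstar S h t ω := by
  induction t with
  | zero => simp [Gstar_zero]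
  | succ t ih => rw [Vstar_succ hsf ht, Gstar_succ, ih (by omega), add_assoc]

-- Wealth accumulated up to `t - 1` minus the cost of the risky position held over `(t - 1, t]`.
def selfFinancingCash (S h : Fin M → ℕ → Ω → ℝ) : ℕ → Ω → ℝ :=
  fun t ω => Gstar S h (t - 1) ω - ∑ m, h m t ω * S m (t - 1) ω

lemma Vstar_selfFinancingCash (t : ℕ) :
    Vstar S (selfFinancingCash S h) h t = Gstar S h t := by
  ext ω
  rcases t with _ | t
  · simp [Vstar, selfFinancingCash, Gstar_zero]
  · simp only [Vstar, selfFinancingCash, Gstar_succ, if_neg (Nat.succ_ne_zero t),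
      add_tsub_cancel_right, mul_sub, sum_sub_distrib]
    ring

lemma selfFinancing_selfFinancingCash (T : ℕ) : SelfFinancing T S (selfFinancingCash S h) h := by
  intro t ht _ ω
  have hV := congrFun (Vstar_selfFinancingCash (S := S) (h := h) t) ω
  simp only [Vstar, if_neg (Nat.one_le_iff_ne_zero.mp ht)] at hV
  simp only [selfFinancingCash, add_tsub_cancel_right, sub_mul, sum_sub_distrib] at hV ⊢
  linarith

end ValueProcess

section Measurability

variable {Ω : Type*} {M T : ℕ} {F : ℕ → MeasurableSpace Ω} {S h : Fin M → ℕ → Ω → ℝ}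

def IsPredictableUpTo (T : ℕ) (F : ℕ → MeasurableSpace Ω) (h : Fin M → ℕ → Ω → ℝ) : Prop :=
  ∀ m t, 1 ≤ t → t ≤ T → Measurable[F (t - 1)] (h m t)

lemma measurable_Gstar (hF : ∀ s t : ℕ, s ≤ t → t ≤ T → F s ≤ F t)
    (hS : ∀ m t, t ≤ T → Measurable[F t] (S m t)) (hh : IsPredictableUpTo T F h) {t : ℕ}
    (ht : t ≤ T) : Measurable[F t] (Gstar S h t) := by
  refine Finset.measurable_sum _ fun m _ => Finset.measurable_sum _ fun u hu => ?_
  rw [mem_Icc] at hu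
  have hu' : u ≤ T := hu.2.trans ht
  exact ((hh m u hu.1 hu').mono (hF _ _ (by omega) ht) le_rfl).mul
    (((hS m u hu').mono (hF _ _ hu.2 ht) le_rfl).sub
      ((hS m (u - 1) (by omega)).mono (hF _ _ (by omega) ht) le_rfl))

lemma measStrategy_selfFinancingCash (hF : ∀ s t : ℕ, s ≤ t → t ≤ T → F s ≤ F t)
    (hS : ∀ m t, t ≤ T → Measurable[F t] (S m t)) (hh : IsPredictableUpTo T F h) :
    MeasStrategy T F (selfFinancingCash S h) h := by
  intro t ht htT
  refine ⟨?_, fun m => hh m t ht htT⟩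
  exact (measurable_Gstar hF hS hh (by omega)).sub <| Finset.measurable_sum _ fun m _ =>
    (hh m t ht htT).mul (hS m (t - 1) (by omega))

end Measurability

section NoArbitrage

variable {Ω : Type*} [Fintype Ω]

lemma sum_mul_nonpos_of_measurable {m : MeasurableSpace Ω} {w H : Ω → ℝ}
    (hw : ∀ A : Finset Ω, MeasurableSet[m] (A : Set Ω) → ∑ ω ∈ A, w ω ≤ 0)
    (hH : Measurable[m] H) (hH0 : 0 ≤ H) : ∑ ω, H ω * w ω ≤ 0 := by
  classical
  -- Split `Ω` into the level sets of `H`, which are `m`-measurable.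
  rw [← sum_fiberwise_of_maps_to (fun ω _ => mem_image_of_mem H (mem_univ ω))]
  refine sum_nonpos fun r hr => ?_
  obtain ⟨ω₀, -, rfl⟩ := mem_image.mp hr
  have hA : MeasurableSet[m] (({ω | H ω = H ω₀} : Finset Ω) : Set Ω) := by
    simpa [Set.preimage, coe_filter] using hH (measurableSet_singleton (H ω₀))
  calc ∑ ω with H ω = H ω₀, H ω * w ω = H ω₀ * ∑ ω with H ω = H ω₀, w ω := by
        rw [mul_sum]; exact sum_congr rfl fun ω hω => by rw [(mem_filter.mp hω).2]
    _ ≤ 0 := mul_nonpos_of_nonneg_of_nonpos (hH0 ω₀) (hw _ hA)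

variable {M T : ℕ} {F : ℕ → MeasurableSpace Ω} {S h : Fin M → ℕ → Ω → ℝ} {Q : Ω → ℝ}

lemma expect_Gstar_nonpos (hQ : IsSupermartingaleMeasure T F S Q) (hh : IsPredictableUpTo T F h)
    (hh0 : ∀ m t, 1 ≤ t → t ≤ T → ∀ ω, 0 ≤ h m t ω) : expect Q (Gstar S h T) ≤ 0 := by
  simp only [_root_.expect, Gstar, mul_sum]
  rw [sum_comm]
  refine sum_nonpos fun m _ => ?_
  rw [sum_comm]
  refine sum_nonpos fun u hu => ?_
  rw [mem_Icc] at hu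
  have hstep (A : Finset Ω) (hA : MeasurableSet[F (u - 1)] (A : Set Ω)) :
      ∑ ω ∈ A, Q ω * (S m u ω - S m (u - 1) ω) ≤ 0 := by
    simpa [mul_sub, sum_sub_distrib] using hQ m (u - 1) u (by omega) hu.2 A hA
  calc ∑ ω, Q ω * (h m u ω * (S m u ω - S m (u - 1) ω))
      = ∑ ω, h m u ω * (Q ω * (S m u ω - S m (u - 1) ω)) := sum_congr rfl fun ω _ => by ring
    _ ≤ 0 := sum_mul_nonpos_of_measurable hstep (hh m u hu.1 hu.2) (hh0 m u hu.1 hu.2)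

theorem not_isArbitrage_of_isSupermartingaleMeasure (hQ : IsSupermartingaleMeasure T F S Q)
    (hQpos : ∀ ω, 0 < Q ω) {h0 : ℕ → Ω → ℝ} (hmeas : MeasStrategy T F h0 h)
    (hh0 : ∀ m t, 1 ≤ t → t ≤ T → ∀ ω, 0 ≤ h m t ω) (hsf : SelfFinancing T S h0 h)
    (Pfam : Set (Ω → ℝ)) : ¬ IsArbitrage T S Pfam h0 h := by
  rintro ⟨hV0, hVT, P, -, hP⟩
  have hVG : Vstar S h0 h T = Gstar S h T := by
    ext ω; rw [Vstar_eq_Vstar_zero_add_Gstar hsf le_rfl, hV0, zero_add]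
  have hVT0 : Vstar S h0 h T = 0 := by
    have hE := expect_Gstar_nonpos hQ (fun m t ht htT => (hmeas t ht htT).2 m) hh0
    rw [← hVG, _root_.expect] at hE
    have hterm (ω : Ω) (_ : ω ∈ univ) : 0 ≤ Q ω * Vstar S h0 h T ω :=
      mul_nonneg (hQpos ω).le (hVT ω)
    ext ω
    exact (mul_eq_zero.mp ((sum_eq_zero_iff_of_nonneg hterm).mp
      (hE.antisymm (sum_nonneg hterm)) ω (mem_univ ω))).resolve_left (hQpos ω).ne'
  simp [hVT0, _root_.expect] at hP

end NoArbitrage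

section ElementaryStrategy

variable {Ω : Type*} {M T : ℕ} {F : ℕ → MeasurableSpace Ω} {S : Fin M → ℕ → Ω → ℝ}

noncomputable def elementaryStrategy (m : Fin M) (s : ℕ) (A : Set Ω) : Fin M → ℕ → Ω → ℝ :=
  fun m' t => if m' = m ∧ t = s + 1 then A.indicator 1 else 0

lemma elementaryStrategy_nonneg (m : Fin M) (s : ℕ) (A : Set Ω) :
    0 ≤ elementaryStrategy m s A := by
  intro m' t ω
  unfold elementaryStrategy
  split_ifs
  · exact Set.indicator_nonneg (fun _ _ => zero_le_one) ω
  · exact le_rfl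

lemma isPredictableUpTo_elementaryStrategy (m : Fin M) {s : ℕ} {A : Set Ω}
    (hA : MeasurableSet[F s] A) : IsPredictableUpTo T F (elementaryStrategy m s A) := by
  intro m' t _ _
  unfold elementaryStrategy
  split_ifs with hmt
  · rw [hmt.2, add_tsub_cancel_right]; exact measurable_const.indicator hA
  · exact measurable_const

lemma Gstar_elementaryStrategy (m : Fin M) {s : ℕ} (hs : s < T) (A : Set Ω) :
    Gstar S (elementaryStrategy m s A) T = A.indicator (S m (s + 1) - S m s) := by
  ext ω
  simp only [Gstar, elementaryStrategy, ite_and, ite_apply, Pi.zero_apply, ite_mul, zero_mul]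
  by_cases hω : ω ∈ A <;> simp [hω, hs.not_ge]

lemma Gstar_sum_smul {ι : Type*} (s : Finset ι) (c : ι → ℝ) (h : ι → Fin M → ℕ → Ω → ℝ) (t : ℕ) :
    Gstar S (∑ i ∈ s, c i • h i) t = ∑ i ∈ s, c i • Gstar S (h i) t := by
  ext ω
  simp only [Gstar, Finset.sum_apply, Pi.smul_apply, smul_eq_mul, sum_mul, mul_sum, mul_assoc]
  conv_rhs => rw [sum_comm]
  exact sum_congr rfl fun m _ => sum_comm

lemma IsPredictableUpTo.sum_smul {ι : Type*} {s : Finset ι} (c : ι → ℝ)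
    {h : ι → Fin M → ℕ → Ω → ℝ} (hh : ∀ i ∈ s, IsPredictableUpTo T F (h i)) :
    IsPredictableUpTo T F (∑ i ∈ s, c i • h i) := by
  intro m t ht htT
  have : (∑ i ∈ s, c i • h i) m t = fun ω => ∑ i ∈ s, c i • h i m t ω := by
    ext ω; simp only [Finset.sum_apply, Pi.smul_apply]
  rw [this]
  exact Finset.measurable_sum s fun i hi => (hh i hi m t ht htT).const_smul (c i)

end ElementaryStrategy

section Arbitrage

variable {Ω : Type*} [Fintype Ω] {M T : ℕ} {S h : Fin M → ℕ → Ω → ℝ} {Pfam : Set (Ω → ℝ)}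

lemma isArbitrage_selfFinancingCash (hPprob : ∀ P ∈ Pfam, IsProb P)
    (hPpos : ∀ ω, ∃ P ∈ Pfam, 0 < P ω) (hG : 0 ≤ Gstar S h T) (hG0 : Gstar S h T ≠ 0) :
    IsArbitrage T S Pfam (selfFinancingCash S h) h := by
  obtain ⟨ω₀, hω₀⟩ := Function.ne_iff.mp hG0
  obtain ⟨P, hP, hPω₀⟩ := hPpos ω₀
  rw [IsArbitrage, Vstar_selfFinancingCash, Vstar_selfFinancingCash, Gstar_zero]
  refine ⟨fun _ => rfl, hG, P, hP, sum_pos' (fun ω _ => mul_nonneg ((hPprob P hP).1 ω) (hG ω))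
    ⟨ω₀, mem_univ ω₀, mul_pos hPω₀ ((hG ω₀).lt_of_ne' hω₀)⟩⟩

end Arbitrage

section Supermartingale

variable {Ω : Type*} {M T : ℕ} {F : ℕ → MeasurableSpace Ω} {S : Fin M → ℕ → Ω → ℝ}

lemma isSupermartingaleMeasure_of_forall_succ {Q : Ω → ℝ}
    (hF : ∀ s t : ℕ, s ≤ t → t ≤ T → F s ≤ F t)
    (hstep : ∀ m s, s + 1 ≤ T → ∀ A : Finset Ω, MeasurableSet[F s] (A : Set Ω) →
      ∑ ω ∈ A, Q ω * S m (s + 1) ω ≤ ∑ ω ∈ A, Q ω * S m s ω) :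
    IsSupermartingaleMeasure T F S Q := by
  intro m t u htu huT A hA
  induction u, htu using Nat.le_induction with
  | base => exact le_rfl
  | succ u htu ih => exact (hstep m u huT A (hF t u htu (by omega) _ hA)).trans (ih (by omega))

theorem exists_isSupermartingaleMeasure_of_not_exists_arbitrage [Fintype Ω] [Nonempty Ω]
    (hF : ∀ s t : ℕ, s ≤ t → t ≤ T → F s ≤ F t) (hS : ∀ m t, t ≤ T → Measurable[F t] (S m t))
    {Pfam : Set (Ω → ℝ)} (hPprob : ∀ P ∈ Pfam, IsProb P) (hPpos : ∀ ω, ∃ P ∈ Pfam, 0 < P ω)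
    (hNA : ¬ ∃ (h0 : ℕ → Ω → ℝ) (h : Fin M → ℕ → Ω → ℝ), MeasStrategy T F h0 h ∧
      (∀ m t, 1 ≤ t → t ≤ T → ∀ ω, 0 ≤ h m t ω) ∧ SelfFinancing T S h0 h ∧
      IsArbitrage T S Pfam h0 h) :
    ∃ Q : Ω → ℝ, IsProb Q ∧ (∀ ω, 0 < Q ω) ∧ IsSupermartingaleMeasure T F S Q := by
  classical
  -- Elementary trades: one unit of asset `m` held over `(s, s + 1]` on an `ℱ_s`-event `A`.
  let I := {i : Fin M × Fin T × Finset Ω // MeasurableSet[F i.2.1] (i.2.2 : Set Ω)}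
  let e (i : I) : Fin M → ℕ → Ω → ℝ := elementaryStrategy i.1.1 i.1.2.1 i.1.2.2
  have hv : ∀ x ∈ PointedCone.hull ℝ (Set.range fun i => Gstar S (e i) T), 0 ≤ x → x = 0 := by
    intro x hx hpos
    obtain ⟨c, hc, rfl⟩ := PointedCone.mem_hull_range_iff.mp hx
    by_contra hne
    rw [← Gstar_sum_smul] at hpos hne
    have hnn : 0 ≤ ∑ i, c i • e i :=
      sum_nonneg fun i _ => smul_nonneg (hc i) (elementaryStrategy_nonneg _ _ _)
    exact hNA ⟨_, _, measStrategy_selfFinancingCash hF hS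
      (IsPredictableUpTo.sum_smul c fun i _ => isPredictableUpTo_elementaryStrategy _ i.2),
      fun m t _ _ ω => hnn m t ω, selfFinancing_selfFinancingCash T,
      isArbitrage_selfFinancingCash hPprob hPpos hpos hne⟩
  obtain ⟨Q, hQ, hQpos, hQe⟩ := exists_pos_isProb_forall_dotProduct_nonpos hv
  refine ⟨Q, hQ, hQpos, isSupermartingaleMeasure_of_forall_succ hF fun m s hs A hA => ?_⟩
  have hQA : Q ⬝ᵥ Gstar S (elementaryStrategy m s A) T ≤ 0 := hQe ⟨(m, ⟨s, hs⟩, A), hA⟩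
  rw [Gstar_elementaryStrategy m hs] at hQA
  simp only [dotProduct, Set.indicator_apply, mem_coe, mul_ite, mul_zero, sum_ite_mem,
    univ_inter, Pi.sub_apply, mul_sub, sum_sub_distrib] at hQA
  linarith

end Supermartingale

theorem fundamental_theorem_multi_period_short_sales_general [Nonempty Ω]
    (T : ℕ) {M : ℕ}
    (F : ℕ → MeasurableSpace Ω)
    (hFmono : ∀ s t : ℕ, s ≤ t → t ≤ T → F s ≤ F t)
    (S : Fin M → ℕ → Ω → ℝ)
    (hSmeas : ∀ (m : Fin M) (t : ℕ), t ≤ T → Measurable[F t] (S m t))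
    (Pfam : Set (Ω → ℝ))
    (hPprob : ∀ P ∈ Pfam, IsProb P)
    (hPpos : ∀ ω : Ω, ∃ P ∈ Pfam, 0 < P ω) :
    (¬ ∃ (h0 : ℕ → Ω → ℝ) (h : Fin M → ℕ → Ω → ℝ),
        MeasStrategy T F h0 h ∧
          (∀ (m : Fin M) (t : ℕ), 1 ≤ t → t ≤ T → ∀ ω, 0 ≤ h m t ω) ∧
          SelfFinancing T S h0 h ∧ IsArbitrage T S Pfam h0 h) ↔
      ∃ Q : Ω → ℝ, IsProb Q ∧ (∀ ω, 0 < Q ω) ∧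
        IsSupermartingaleMeasure T F S Q := by
  refine ⟨exists_isSupermartingaleMeasure_of_not_exists_arbitrage hFmono hSmeas hPprob hPpos, ?_⟩
  rintro ⟨Q, -, hQpos, hQ⟩ ⟨h0, h, hmeas, hh0, hsf, harb⟩
  exact not_isArbitrage_of_isSupermartingaleMeasure hQ hQpos hmeas hh0 hsf Pfam harb

/-- Fundamental theorem of asset pricing under model uncertainty with short sales
prohibitions (multi-period). -/
theorem fundamental_theorem_multi_period_short_sales [Nonempty Ω]
    (T : ℕ) {M : ℕ}
    (F : ℕ → MeasurableSpace Ω)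
    (hFmono : ∀ s t : ℕ, s ≤ t → t ≤ T → F s ≤ F t)
    (hF0 : F 0 = ⊥) (hFT : F T = ⊤)
    (S : Fin M → ℕ → Ω → ℝ)
    (hSmeas : ∀ (m : Fin M) (t : ℕ), t ≤ T → Measurable[F t] (S m t))
    (Pfam : Set (Ω → ℝ)) (hPne : Pfam.Nonempty)
    (hPprob : ∀ P ∈ Pfam, IsProb P)
    (hPpos : ∀ ω : Ω, ∃ P ∈ Pfam, 0 < P ω) :
    (¬ ∃ (h0 : ℕ → Ω → ℝ) (h : Fin M → ℕ → Ω → ℝ),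
        MeasStrategy T F h0 h ∧
          (∀ (m : Fin M) (t : ℕ), 1 ≤ t → t ≤ T → ∀ ω, 0 ≤ h m t ω) ∧
          SelfFinancing T S h0 h ∧ IsArbitrage T S Pfam h0 h) ↔
      ∃ Q : Ω → ℝ, IsProb Q ∧ (∀ ω, 0 < Q ω) ∧
        IsSupermartingaleMeasure T F S Q :=
  fundamental_theorem_multi_period_short_sales_general T F hFmono S hSmeas Pfam hPprob hPpos
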